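/- arXiv:math/9311207 — 3 statements merged into one kernel-verified Lean document; each statement's English description precedes it below -/
import Mathlib

section
/- Let f : [λ]^2 → k be a coloring, ρ an indecomposable ordinal, and σ a finite sequence of colors. If x ⊆ λ is (ρ,σ)-good for f and x = ⋃_{j<m} t_j is a finite union, then there exist j < m and y ⊆ t_j such that y is (ρ,σ)-good for f. -/
open Cardinal Ordinal

/-- The order type of a set of ordinals (an `Ordinal.{1}` for universe reasons). -/
noncomputable def otype (s : Set Ordinal.{0}) : Ordinal.{1} :=
  Ordinal.type (Subrel ((· < ·) : Ordinal → Ordinal → Prop) (· ∈ s))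

/-- `OT s o` means the set of ordinals `s` has order type `o`. -/
def OT (s : Set Ordinal.{0}) (o : Ordinal.{0}) : Prop := otype s = Ordinal.lift.{1,0} o

/-- `2^{<κ} = sup { 2^μ : μ < κ }`. -/
noncomputable def twoLT (κ : Cardinal.{0}) : Cardinal.{0} := ⨆ μ : Set.Iio κ, 2 ^ (μ : Cardinal)

/-- `X` is `i`-homogeneous for the pair coloring `f`. -/
def Homog {α : Type*} (f : Ordinal → Ordinal → α) (X : Set Ordinal) (i : α) : Prop :=
  ∀ a ∈ X, ∀ b ∈ X, a < b → f a b = i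

/-- `Good f ρ σ x`: `x` is `(ρ,σ)`-good for the coloring `f`.  A singleton is `(ρ,⟨⟩)`-good;
`x` is `(ρ, σ⌢⟨i⟩)`-good iff `x = ⋃_{ξ<ρ} x_ξ` with each `x_ξ` `(ρ,σ)`-good,
`sup x_ξ < inf x_η` for `ξ < η`, and all cross pairs colored `i`. -/
inductive Good (f : Ordinal → Ordinal → ℕ) (ρ : Ordinal.{0}) : List ℕ → Set Ordinal.{0} → Prop
  | nil (a : Ordinal) : Good f ρ [] {a}
  | cons (σ : List ℕ) (i : ℕ) (x : Ordinal → Set Ordinal)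
      (hgood : ∀ ξ < ρ, Good f ρ σ (x ξ))
      (hsep : ∀ ξ < ρ, ∀ η < ρ, ξ < η → sSup (x ξ) < sInf (x η))
      (hcol : ∀ ξ < ρ, ∀ η < ρ, ξ < η → ∀ a ∈ x ξ, ∀ b ∈ x η, f a b = i) :
      Good f ρ (σ ++ [i]) (⋃ ξ ∈ Set.Iio ρ, x ξ)

/-!
Powers of `ω` are indivisible: in every finite partition of `ω ^ γ` some piece has order type
`ω ^ γ`. For `α * ω` with `α` indivisible, some piece wins infinitely many of the blocks
`[α * n, α * (n + 1))`, and these blocks stack to order type `α * ω`; at a limit `γ`, some piece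
wins `ω ^ δ` for cofinally many `δ < γ`.

The theorem then follows by induction on goodness. If `x = ⋃_{ξ<ρ} x_ξ`, each `ξ < ρ` gets a colour
`j` such that `t j` contains a good subset of `x_ξ`; a copy of `ρ` inside one colour class picks `ρ`
of these subsets in increasing order, and their union is again good and lies in `t j`.
-/

open Set

section OrderType

variable {S T : Set Ordinal.{0}}

theorem otype_mono (h : S ⊆ T) : otype S ≤ otype T := type_mono h

theorem otype_le_otype_of_strictMonoOn {e : Ordinal → Ordinal} (he : StrictMonoOn e S)
    (hST : MapsTo e S T) : otype S ≤ otype T :=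
  type_le_iff'.2 ⟨RelEmbedding.ofMonotone (hST.restrict e S T) fun a b h => he a.2 b.2 h⟩

theorem otype_Iio (ρ : Ordinal.{0}) : otype (Iio ρ) = lift.{1} ρ := type_lt_Iio ρ

theorem exists_strictMonoOn_of_lift_le_otype {ρ : Ordinal.{0}} (h : lift.{1} ρ ≤ otype S) :
    ∃ e : Ordinal → Ordinal, StrictMonoOn e (Iio ρ) ∧ MapsTo e (Iio ρ) S := by
  rw [← otype_Iio] at h
  obtain ⟨g⟩ := type_le_iff'.1 h
  refine ⟨fun ξ => if hξ : ξ < ρ then g ⟨ξ, hξ⟩ else 0, fun ξ hξ η hη hlt => ?_, fun ξ hξ => ?_⟩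
  · simp only [dif_pos (mem_Iio.1 hξ), dif_pos (mem_Iio.1 hη)]
    exact g.map_rel_iff.2 hlt
  · simp only [dif_pos (mem_Iio.1 hξ)]
    exact (g _).2

theorem otype_add_otype_le_otype_union (hST : ∀ a ∈ S, ∀ b ∈ T, a < b) :
    otype S + otype T ≤ otype (S ∪ T) := by
  refine type_le_iff'.2 ⟨RelEmbedding.ofMonotone
    (Sum.elim (fun a => ⟨a, .inl a.2⟩) (fun b => ⟨b, .inr b.2⟩)) ?_⟩
  rintro _ _ (⟨h⟩ | ⟨h⟩ | ⟨a, b⟩)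
  · exact h
  · exact h
  · exact hST _ a.2 _ b.2

theorem lift_mul_omega0_le_otype {α : Ordinal.{0}}
    (h : {n : ℕ | lift.{1} α ≤ otype (S ∩ Ico (α * n) (α * (n + 1)))}.Infinite) :
    lift.{1} (α * ω) ≤ otype S := by
  have stack : ∀ n b : ℕ, lift.{1} α * n ≤ otype (S ∩ Ici (α * b)) := by
    intro n
    induction n with
    | zero => simp
    | succ n ih =>
      intro b
      obtain ⟨c, hc, hbc⟩ := h.exists_gt b
      calc lift.{1} α * (n + 1 : ℕ) = lift.{1} α + lift.{1} α * n := by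
            rw [add_comm n 1, Nat.cast_add, Nat.cast_one, mul_one_add]
        _ ≤ otype (S ∩ Ico (α * c) (α * (c + 1))) + otype (S ∩ Ici (α * (c + 1 : ℕ))) :=
            add_le_add hc (ih (c + 1))
        _ ≤ otype ((S ∩ Ico (α * c) (α * (c + 1))) ∪ S ∩ Ici (α * (c + 1 : ℕ))) :=
            otype_add_otype_le_otype_union fun a ha b hb => ha.2.2.trans_le (by simpa using hb.2)
        _ ≤ otype (S ∩ Ici (α * b)) := by
            refine otype_mono (union_subset (inter_subset_inter_right _ fun ξ hξ => ?_)
              (inter_subset_inter_right _ fun ξ hξ => ?_))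
            · exact (mul_le_mul_right (Nat.cast_le.2 hbc.le) α).trans hξ.1
            · exact (mul_le_mul_right (Nat.cast_le.2 (hbc.le.trans c.le_succ)) α).trans hξ
  rw [Ordinal.lift_mul, lift_omega0]
  refine le_of_forall_lt fun x hx => ?_
  obtain ⟨c, hcω, hxc⟩ := (lt_mul_iff_of_isSuccLimit isSuccLimit_omega0).1 hx
  obtain ⟨n, rfl⟩ := lt_omega0.1 hcω
  exact hxc.trans_le ((stack n 0).trans (otype_mono inter_subset_left))

end OrderType

/-- The partition relation `ρ → (ρ)¹_m` for every finite `m`. -/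
def IsIndivisible (ρ : Ordinal.{0}) : Prop :=
  ∀ (m : ℕ) (A : Fin m → Set Ordinal), Iio ρ ⊆ ⋃ j, A j → ∃ j, lift.{1} ρ ≤ otype (A j)

theorem IsIndivisible.pos {ρ : Ordinal.{0}} (hρ : IsIndivisible ρ) : 0 < ρ := by
  rw [pos_iff_ne_zero]
  rintro rfl
  obtain ⟨j, -⟩ := hρ 0 Fin.elim0 (by simp)
  exact j.elim0

theorem isIndivisible_one : IsIndivisible 1 := by
  intro m A hA
  obtain ⟨j, hj⟩ := mem_iUnion.1 (hA (mem_Iio.2 zero_lt_one))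
  refine ⟨j, otype_Iio 1 ▸ otype_mono fun ξ hξ => ?_⟩
  rwa [Order.lt_one_iff.1 (mem_Iio.1 hξ)]

theorem IsIndivisible.mul_omega0 {α : Ordinal.{0}} (hα : IsIndivisible α) :
    IsIndivisible (α * ω) := by
  intro m A hA
  have block : ∀ n : ℕ, ∃ j, lift.{1} α ≤ otype (A j ∩ Ico (α * n) (α * (n + 1))) := by
    intro n
    obtain ⟨j, hj⟩ := hα m (fun j => Iio α ∩ (α * n + ·) ⁻¹' A j) fun ξ hξ => by
      have hlt : α * n + ξ < α * ω := calc
        α * n + ξ < α * (n + 1) := by rw [mul_add_one]; exact (add_lt_add_iff_left _).2 hξ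
        _ ≤ α * ω := mul_le_mul_right (by exact_mod_cast (natCast_lt_omega0 (n + 1)).le) α
      obtain ⟨j, hj⟩ := mem_iUnion.1 (hA hlt)
      exact mem_iUnion.2 ⟨j, hξ, hj⟩
    refine ⟨j, hj.trans (otype_le_otype_of_strictMonoOn
      (fun a _ b _ h => (add_lt_add_iff_left (α * n)).2 h) ?_)⟩
    rintro ξ ⟨hξα, hξA⟩
    exact ⟨hξA, le_self_add, by rw [mul_add_one]; exact (add_lt_add_iff_left _).2 hξα⟩
  choose col hcol using block
  obtain ⟨j, hj⟩ := Finite.exists_infinite_fiber col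
  exact ⟨j, lift_mul_omega0_le_otype <| (infinite_coe_iff.1 hj).mono fun n hn =>
    (show col n = j from hn) ▸ hcol n⟩

theorem isIndivisible_of_forall_lt_exists {ρ : Ordinal.{0}} (hρ : 0 < ρ)
    (h : ∀ x < ρ, ∃ α, x < α ∧ α ≤ ρ ∧ IsIndivisible α) : IsIndivisible ρ := by
  intro m A hA
  have large : ∀ x < ρ, ∃ j, lift.{1} x < otype (A j) := by
    intro x hx
    obtain ⟨α, hxα, hαρ, hα⟩ := h x hx
    obtain ⟨j, hj⟩ := hα m A ((Iio_subset_Iio hαρ).trans hA)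
    exact ⟨j, (lift_lt.2 hxα).trans_le hj⟩
  have : Nonempty (Fin m) := ⟨(large 0 hρ).choose⟩
  obtain ⟨j, hj⟩ := exists_eq_ciSup_of_finite (f := fun j => otype (A j))
  refine ⟨j, le_of_forall_lt fun x hx => ?_⟩
  obtain ⟨x, hxρ, rfl⟩ := lt_lift_iff.1 hx
  obtain ⟨i, hi⟩ := large x hxρ
  exact hi.trans_le (hj ▸ le_ciSup (f := fun j => otype (A j)) (Finite.bddAbove_range _) i)

theorem isIndivisible_omega0_opow (γ : Ordinal.{0}) : IsIndivisible (ω ^ γ) := by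
  induction γ using Ordinal.limitRecOn with
  | zero => simpa using isIndivisible_one
  | add_one δ ih => simpa [opow_succ] using ih.mul_omega0
  | limit γ hγ ih =>
    refine isIndivisible_of_forall_lt_exists (opow_pos γ omega0_pos) fun x hx => ?_
    obtain ⟨δ, hδ, hxδ⟩ := (lt_opow_of_isSuccLimit omega0_ne_zero hγ).1 hx
    exact ⟨ω ^ δ, hxδ, opow_le_opow_right omega0_pos hδ.le, ih δ hδ⟩

section Good

variable {f : Ordinal → Ordinal → ℕ} {ρ : Ordinal.{0}} {σ : List ℕ} {x : Set Ordinal}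

theorem Good.nonempty (hρ : 0 < ρ) (hx : Good f ρ σ x) : x.Nonempty := by
  induction hx with
  | nil a => exact singleton_nonempty a
  | cons σ i x _ _ _ ih => exact (ih 0 hρ).mono (subset_biUnion_of_mem (u := x) hρ)

theorem Good.bddAbove (hx : Good f ρ σ x) : BddAbove x := by
  induction hx with
  | nil a => exact bddAbove_singleton
  | cons σ i x _ _ _ ih =>
    have : Small.{0} (Iio ρ) := bddAbove_iff_small.1 bddAbove_Iio
    have : ∀ ξ ∈ Iio ρ, Small.{0} (x ξ) := fun ξ hξ => bddAbove_iff_small.1 (ih ξ hξ)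
    exact bddAbove_iff_small.2 (@small_biUnion _ _ _ _ (fun ξ _ => x ξ) this)

theorem Good.exists_subset_of_subset_iUnion (hρ : IsIndivisible ρ) (hx : Good f ρ σ x) :
    ∀ {m : ℕ} (t : Fin m → Set Ordinal), x ⊆ ⋃ j, t j → ∃ j, ∃ y ⊆ t j, Good f ρ σ y := by
  induction hx with
  | nil a =>
    intro m t ht
    obtain ⟨j, hj⟩ := mem_iUnion.1 (ht (mem_singleton a))
    exact ⟨j, {a}, singleton_subset_iff.2 hj, .nil a⟩
  | cons σ i x hgood hsep hcol ih =>
    intro m t ht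
    have cover : Iio ρ ⊆ ⋃ j, {ξ | ξ < ρ ∧ ∃ y ⊆ t j ∩ x ξ, Good f ρ σ y} := by
      intro ξ hξ
      obtain ⟨j, y, hy, hyg⟩ := ih ξ hξ (fun j => t j ∩ x ξ) fun a ha =>
        have ⟨j, hj⟩ := mem_iUnion.1 (ht (mem_biUnion hξ ha))
        mem_iUnion.2 ⟨j, hj, ha⟩
      exact mem_iUnion.2 ⟨j, hξ, y, hy, hyg⟩
    obtain ⟨j, hj⟩ := hρ m _ cover
    obtain ⟨e, he, heA⟩ := exists_strictMonoOn_of_lift_le_otype hj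
    have hy : ∀ ξ < ρ, ∃ y, y ⊆ t j ∩ x (e ξ) ∧ Good f ρ σ y := fun ξ hξ => (heA hξ).2
    choose! z hzsub hzgood using hy
    have hzx : ∀ ξ < ρ, z ξ ⊆ x (e ξ) := fun ξ hξ => (hzsub ξ hξ).trans inter_subset_right
    refine ⟨j, ⋃ ξ ∈ Iio ρ, z ξ, iUnion₂_subset fun ξ hξ => (hzsub ξ hξ).trans inter_subset_left,
      .cons σ i z hzgood (fun ξ hξ η hη hξη => ?_) fun ξ hξ η hη hξη a ha b hb => ?_⟩
    · have hξρ := (heA hξ).1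
      have hηρ := (heA hη).1
      calc sSup (z ξ) ≤ sSup (x (e ξ)) :=
            csSup_le_csSup (hgood _ hξρ).bddAbove ((hzgood ξ hξ).nonempty hρ.pos) (hzx ξ hξ)
        _ < sInf (x (e η)) := hsep _ hξρ _ hηρ (he hξ hη hξη)
        _ ≤ sInf (z η) := csInf_le_csInf (OrderBot.bddBelow _)
            ((hzgood η hη).nonempty hρ.pos) (hzx η hη)
    · exact hcol _ (heA hξ).1 _ (heA hη).1 (he hξ hη hξη) a (hzx ξ hξ ha) b (hzx η hη hb)

end Good

theorem good_of_finite_union_general (f : Ordinal → Ordinal → ℕ)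
    (ρ : Ordinal.{0}) (hρ : ∃ γ, ρ = Ordinal.omega0 ^ γ)
    (σ : List ℕ) (x : Set Ordinal) (hgood : Good f ρ σ x)
    (m : ℕ) (t : Fin m → Set Ordinal) (hcover : x = ⋃ j, t j) :
    ∃ j : Fin m, ∃ y ⊆ t j, Good f ρ σ y := by
  obtain ⟨n, rfl⟩ := hρ
  exact hgood.exists_subset_of_subset_iUnion (opow_natCast ω n ▸ isIndivisible_omega0_opow n) t
    hcover.subset

/-- If `ρ` is indecomposable, `x ⊆ λ` is `(ρ,σ)`-good and `x = ⋃_{j<m} t_j`,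
then some `t_j` contains a `(ρ,σ)`-good subset. -/
theorem good_of_finite_union (lam : Ordinal.{0}) (k : ℕ) (f : Ordinal → Ordinal → ℕ)
    (hf : ∀ a b, f a b < k) (ρ : Ordinal.{0}) (hρ : ∃ γ, ρ = Ordinal.omega0 ^ γ)
    (σ : List ℕ) (x : Set Ordinal) (hx : x ⊆ Set.Iio lam) (hgood : Good f ρ σ x)
    (m : ℕ) (t : Fin m → Set Ordinal) (hcover : x = ⋃ j, t j) :
    ∃ j : Fin m, ∃ y ⊆ t j, Good f ρ σ y :=
  good_of_finite_union_general f ρ hρ σ x hgood m t hcover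
end

section
/- Any (ρ,σ)-good set for a coloring f : [λ]^2 → k has order type exactly ρ^n, where n is the length of σ and exponentiation is ordinal exponentiation. -/
open Cardinal Ordinal

/-! A `(ρ, σ⌢⟨i⟩)`-good set is the concatenation of `ρ` consecutive blocks, each `(ρ, σ)`-good.
By induction each block is enumerated increasingly by `ρ ^ |σ|`, and enumerating position
`ρ ^ |σ| * ξ + δ` by the `δ`-th element of block `ξ` (ordinal division with remainder) gives an
increasing enumeration of the whole set by `ρ ^ |σ| * ρ = ρ ^ (|σ| + 1)`. -/

open Set

section ConcatBlocks

variable {α : Type*}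

noncomputable def concatBlocks (c : Ordinal) (g : Ordinal → Ordinal → α) (β : Ordinal) : α :=
  g (β / c) (β % c)

theorem concatBlocks_mul_add {c ξ δ : Ordinal} (g : Ordinal → Ordinal → α) (hδ : δ < c) :
    concatBlocks c g (c * ξ + δ) = g ξ δ := by
  rw [concatBlocks, Ordinal.mul_add_div _ hδ.ne_bot, Ordinal.div_eq_zero_of_lt hδ, add_zero,
    Ordinal.mul_add_mod_self, Ordinal.mod_eq_of_lt hδ]

theorem Ordinal.mul_add_lt_mul {c ξ δ ρ : Ordinal} (hξ : ξ < ρ) (hδ : δ < c) :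
    c * ξ + δ < c * ρ :=
  calc c * ξ + δ < c * Order.succ ξ := by rw [Ordinal.mul_succ]; gcongr
    _ ≤ c * ρ := by gcongr; exact Order.succ_le_of_lt hξ

theorem Ordinal.mod_lt_mod_of_lt_of_div_eq {a b c : Ordinal} (hab : a < b) (hdiv : a / c = b / c) :
    a % c < b % c := by
  have h := Ordinal.div_add_mod a c ▸ Ordinal.div_add_mod b c ▸ hab
  rw [hdiv] at h
  exact (add_lt_add_iff_left _).1 h

theorem image_concatBlocks (c ρ : Ordinal) (g : Ordinal → Ordinal → α) :
    concatBlocks c g '' Iio (c * ρ) = ⋃ ξ ∈ Iio ρ, g ξ '' Iio c := by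
  rcases eq_or_ne c 0 with rfl | hc
  · simp
  ext a
  simp only [mem_image, mem_iUnion, mem_Iio, exists_prop]
  constructor
  · rintro ⟨β, hβ, rfl⟩
    exact ⟨β / c, (Ordinal.lt_mul_iff_div_lt hc).1 hβ, β % c, Ordinal.mod_lt β hc, rfl⟩
  · rintro ⟨ξ, hξ, δ, hδ, rfl⟩
    exact ⟨c * ξ + δ, Ordinal.mul_add_lt_mul hξ hδ, concatBlocks_mul_add g hδ⟩

theorem strictMonoOn_concatBlocks [Preorder α] {c ρ : Ordinal} {g : Ordinal → Ordinal → α}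
    (hg : ∀ ξ < ρ, StrictMonoOn (g ξ) (Iio c))
    (hsep : ∀ ξ < ρ, ∀ η < ρ, ξ < η → ∀ δ < c, ∀ ε < c, g ξ δ < g η ε) :
    StrictMonoOn (concatBlocks c g) (Iio (c * ρ)) := by
  rcases eq_or_ne c 0 with rfl | hc
  · simp [StrictMonoOn]
  intro β₁ hβ₁ β₂ hβ₂ hlt
  rw [mem_Iio, Ordinal.lt_mul_iff_div_lt hc] at hβ₁ hβ₂
  rcases (Ordinal.div_le_left hlt.le c).lt_or_eq with hdiv | hdiv
  · exact hsep _ hβ₁ _ hβ₂ hdiv _ (Ordinal.mod_lt _ hc) _ (Ordinal.mod_lt _ hc)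
  · unfold concatBlocks
    rw [hdiv]
    exact hg _ hβ₂ (Ordinal.mod_lt _ hc) (Ordinal.mod_lt _ hc)
      (Ordinal.mod_lt_mod_of_lt_of_div_eq hlt hdiv)

end ConcatBlocks

theorem OT_of_strictMonoOn {o : Ordinal.{0}} {g : Ordinal.{0} → Ordinal.{0}}
    (hg : StrictMonoOn g (Iio o)) : OT (g '' Iio o) o := by
  unfold OT otype
  rw [← type_lt_Iio]
  exact ((hg.orderIso g _).ordinalType_congr).symm

namespace Good

variable {f : Ordinal → Ordinal → ℕ} {ρ : Ordinal.{0}} {σ : List ℕ} {x : Set Ordinal}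

theorem bddAbove_s6 (h : Good f ρ σ x) : BddAbove x := by
  induction h with
  | nil a => exact bddAbove_singleton
  | cons σ i x _ _ _ ih =>
    have hsmall : ∀ ξ (hξ : ξ ∈ Iio ρ), Small.{0} (x ξ) := fun ξ hξ =>
      Ordinal.bddAbove_iff_small.1 (ih ξ hξ)
    exact Ordinal.bddAbove_iff_small.2 (@small_biUnion _ _ _ _ (fun ξ _ => x ξ) hsmall)

theorem exists_strictMonoOn_image_eq (h : Good f ρ σ x) :
    ∃ g : Ordinal → Ordinal, StrictMonoOn g (Iio (ρ ^ (σ.length : Ordinal))) ∧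
      g '' Iio (ρ ^ (σ.length : Ordinal)) = x := by
  induction h with
  | nil a =>
    refine ⟨fun _ => a, ?_, ?_⟩
    · simp [StrictMonoOn]
    · simp
  | cons σ i x hgood hsep _ ih =>
    choose! g hg_mono hg_img using ih
    have hlt : ∀ ξ < ρ, ∀ η < ρ, ξ < η → ∀ a ∈ x ξ, ∀ b ∈ x η, a < b :=
      fun ξ hξ η hη hξη a ha b hb =>
        calc a ≤ sSup (x ξ) := le_csSup (hgood ξ hξ).bddAbove_s6 ha
          _ < sInf (x η) := hsep ξ hξ η hη hξη
          _ ≤ b := csInf_le (OrderBot.bddBelow _) hb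
    have hpow : ρ ^ ((σ ++ [i]).length : Ordinal) = ρ ^ (σ.length : Ordinal) * ρ := by
      simp [opow_add]
    rw [hpow]
    refine ⟨concatBlocks _ g, strictMonoOn_concatBlocks hg_mono ?_, ?_⟩
    · intro ξ hξ η hη hξη δ hδ ε hε
      exact hlt ξ hξ η hη hξη _ (hg_img ξ hξ ▸ mem_image_of_mem _ hδ) _
        (hg_img η hη ▸ mem_image_of_mem _ hε)
    · rw [image_concatBlocks]
      exact iUnion₂_congr hg_img

end Good

theorem good_otype_general (f : Ordinal → Ordinal → ℕ) (ρ : Ordinal.{0}) (σ : List ℕ)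
    (x : Set Ordinal) (hgood : Good f ρ σ x) :
    OT x (ρ ^ (σ.length : Ordinal)) := by
  obtain ⟨g, hg, rfl⟩ := hgood.exists_strictMonoOn_image_eq
  exact OT_of_strictMonoOn hg

/-- Any `(ρ,σ)`-good set has order type exactly `ρ ^ (length σ)` (ordinal exponentiation). -/
theorem good_otype (lam : Ordinal.{0}) (k : ℕ) (f : Ordinal → Ordinal → ℕ)
    (hf : ∀ a b, f a b < k) (ρ : Ordinal.{0}) (σ : List ℕ)
    (x : Set Ordinal) (hx : x ⊆ Set.Iio lam) (hgood : Good f ρ σ x) :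
    OT x (ρ ^ (σ.length : Ordinal)) :=
  good_otype_general f ρ σ x hgood
end

section
/- Let κ be regular and λ = (2^{<κ})^+. Then λ^+ → (λ^+, κ+1)^2: for every f : [λ^+]^2 → 2, either there is a 0-homogeneous set of cardinality λ^+ or a 1-homogeneous set of order type κ+1. -/
open Cardinal Ordinal

/-!
For each `β < λ⁺` fix a maximal set `M β ⊆ β` such that `M β ∪ {β}` is `1`-homogeneous. If some
`M β` has at least `κ` elements, its first `κ` elements together with `β` form a `1`-homogeneous set
of order type `κ + 1`. Otherwise every `M β` is a set of fewer than `κ` ordinals below `β`, and a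
closing-off argument along a sequence of length `κ` (a weak form of Fodor's lemma) yields `γ < λ⁺`
such that `M β ⊆ γ` for `λ⁺` many `β`. As `λ^{<κ} = λ`, there are only `λ` candidates for such an
`M β`, so `λ⁺` many of these `β` share the same `M β`. For two of them `α < β`, the colour `f α β`
cannot be `1`, since otherwise `M β ∪ {α}` would contradict the maximality of `M β`.
-/

open Set Order

universe u

namespace Cardinal

theorem power_le_mul_of_lt_cof {c m e : Cardinal.{u}} (hm : m < c.ord.cof)
    (hd : ∀ d < c, d ^ m ≤ e) : c ^ m ≤ c * e := by
  -- as `m < cf c`, a function `g : m → c` is a function into some initial segment `Iio b`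
  have hbounded : ∀ g : m.out → c.ord.ToType, ∃ b, ∀ i, g i < b := by
    intro g
    by_contra! hcofinal
    have hcof : c.ord.cof ≤ #(range g) := by
      rw [← cof_toType]
      refine Order.cof_le fun b => ?_
      obtain ⟨i, hi⟩ := hcofinal b
      exact ⟨g i, mem_range_self i, hi⟩
    exact (hm.trans_le (hcof.trans (mk_range_le.trans (mk_out m).le))).false
  choose B hB using hbounded
  have hinj : Function.Injective
      fun g : m.out → c.ord.ToType => (⟨B g, fun i => ⟨g i, hB g i⟩⟩ : Σ b, m.out → Iio b) :=
    Function.LeftInverse.injective (g := fun p i => (p.2 i).1) fun _ => rfl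
  calc c ^ m = #(m.out → c.ord.ToType) := by rw [← power_def, mk_ord_toType, mk_out]
    _ ≤ #(Σ b : c.ord.ToType, m.out → Iio b) := mk_le_of_injective hinj
    _ ≤ sum fun _ : c.ord.ToType => e := by
        rw [mk_sigma]
        refine sum_le_sum _ _ fun b => ?_
        rw [← power_def, mk_out]
        exact hd _ ((mk_Iio_lt b (by rw [mk_ord_toType, type_toType])).trans_eq (mk_ord_toType c))
    _ = c * e := by rw [sum_const', mk_ord_toType]

theorem succ_power_le {ν m : Cardinal.{u}} (hν : ℵ₀ ≤ ν) (hm : m ≤ ν) (h : ν ^ m ≤ ν) :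
    succ ν ^ m ≤ succ ν :=
  calc succ ν ^ m ≤ succ ν * ν := by
        refine power_le_mul_of_lt_cof ?_ fun d hd =>
          (power_le_power_right (le_of_lt_succ hd)).trans h
        rw [(isRegular_succ hν).cof_ord]
        exact lt_succ_of_le hm
    _ ≤ succ ν * succ ν := mul_le_mul_right (le_succ ν) _
    _ = succ ν := mul_eq_self (hν.trans (le_succ ν))

end Cardinal

section twoLT

variable {κ : Cardinal.{0}}

-- `twoLT κ` unfolds to Mathlib's `2 ^< κ`.
theorem le_twoLT (κ : Cardinal.{0}) : κ ≤ twoLT κ :=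
  le_of_forall_lt fun c hc => (cantor c).trans_le (le_powerlt 2 hc)

theorem exists_lt_two_power_of_lt_twoLT {d : Cardinal.{0}} (h : d < twoLT κ) :
    ∃ μ < κ, d < 2 ^ μ := by
  obtain ⟨⟨μ, hμ⟩, hd⟩ := exists_lt_of_lt_ciSup' h
  exact ⟨μ, hμ, hd⟩

theorem le_cof_ord_twoLT (hκ : κ.IsRegular) (h : ∀ μ < κ, 2 ^ μ < twoLT κ) :
    κ ≤ (twoLT κ).ord.cof := by
  rw [← cof_toType, Order.le_cof_iff]
  intro s hs
  by_contra! hsκ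
  have hbelow : ∀ x : s, ∃ μ < κ, (ToType.mk.symm x.1 : Ordinal).card < 2 ^ μ := fun x =>
    exists_lt_two_power_of_lt_twoLT (lt_ord.1 (ToType.mk.symm x.1).2)
  choose μ hμκ hμ using hbelow
  have hsup : (⨆ x, μ x) < κ := Cardinal.iSup_lt_of_lt_cof_ord (by rwa [hκ.cof_ord]) hμκ
  obtain ⟨ρ, hρκ, hρ⟩ := exists_lt_two_power_of_lt_twoLT (h _ hsup)
  obtain ⟨x, hx, hle⟩ := hs (ToType.mk ⟨((2 : Cardinal) ^ ρ).ord, ord_lt_ord.2 (h ρ hρκ)⟩)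
  have hρx : (2 : Cardinal) ^ ρ ≤ (ToType.mk.symm x : Ordinal).card := by
    simpa using card_le_card (ToType.mk.symm.monotone hle)
  refine (hρx.trans_lt ((hμ ⟨x, hx⟩).trans_le ?_)).not_ge hρ.le
  exact power_le_power_left two_ne_zero (le_ciSup Cardinal.bddAbove_of_small _)

theorem twoLT_power_le (hκ : κ.IsRegular) {m : Cardinal.{0}} (hm : m < κ) :
    twoLT κ ^ m ≤ twoLT κ := by
  have hbelow : ∀ μ < κ, ((2 : Cardinal) ^ μ) ^ m ≤ twoLT κ := fun μ hμ => by
    rw [← power_mul]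
    exact le_powerlt 2 (mul_lt_of_lt hκ.aleph0_le hμ hm)
  by_cases hattained : ∃ μ < κ, twoLT κ ≤ 2 ^ μ
  · obtain ⟨μ, hμ, hle⟩ := hattained
    exact (power_le_power_right hle).trans (hbelow μ hμ)
  push Not at hattained
  calc twoLT κ ^ m ≤ twoLT κ * twoLT κ := by
        refine power_le_mul_of_lt_cof (hm.trans_le (le_cof_ord_twoLT hκ hattained)) fun d hd => ?_
        obtain ⟨μ, hμ, hdμ⟩ := exists_lt_two_power_of_lt_twoLT hd
        exact (power_le_power_right hdμ.le).trans (hbelow μ hμ)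
    _ = twoLT κ := mul_eq_self (hκ.aleph0_le.trans (le_twoLT κ))

end twoLT

theorem Cardinal.mk_subsets_mk_lt_le {α : Type u} {s : Set α} {κ c : Cardinal.{u}} (hc : ℵ₀ ≤ c)
    (hs : #s ≤ c) (hκc : κ ≤ c) (hpow : ∀ ρ < κ, c ^ ρ ≤ c) :
    #{t : Set α // t ⊆ s ∧ #t < κ} ≤ c := by
  have hcover : {t : Set α | t ⊆ s ∧ #t < κ} ⊆
      ⋃ x : κ.ord.ToType, {t | t ⊆ s ∧ #t ≤ (ToType.mk.symm x : Ordinal).card} := by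
    rintro t ⟨hts, htκ⟩
    refine mem_iUnion.2 ⟨ToType.mk ⟨(#t).ord, ord_lt_ord.2 htκ⟩, hts, ?_⟩
    simp
  calc #{t : Set α // t ⊆ s ∧ #t < κ} ≤ _ := mk_le_mk_of_subset hcover
    _ ≤ #κ.ord.ToType * ⨆ x : κ.ord.ToType, #{t | t ⊆ s ∧ #t ≤ (ToType.mk.symm x : Ordinal).card} :=
        mk_iUnion_le _
    _ ≤ c * c := by
        rw [mk_ord_toType]
        refine mul_le_mul' hκc (ciSup_le' fun x => (mk_bounded_subset_le _ _).trans ?_)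
        exact (power_le_power_right (max_le hs hc)).trans (hpow _ (lt_ord.1 (ToType.mk.symm x).2))
    _ = c := mul_eq_self hc

theorem Ordinal.exists_subset_Iio_of_mk_lt_cof {s : Set Ordinal.{u}} {a : Ordinal.{u}}
    (hsa : s ⊆ Iio a) (hs : #s < Cardinal.lift.{u + 1} a.cof) : ∃ b < a, s ⊆ Iio b := by
  refine ⟨_, sSup_add_one_lt_of_lt_cof (by rwa [← lift_cof]) hsa, fun x hx => ?_⟩
  have hbdd : BddAbove ((· + 1) '' s) := ⟨a, by
    rintro _ ⟨y, hy, rfl⟩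
    exact add_one_le_of_lt (hsa hy)⟩
  exact (lt_add_one x).trans_le (le_csSup hbdd (mem_image_of_mem _ hx))

theorem Ordinal.exists_closing_sequence {μ : Cardinal.{u}} (hμ : μ.IsRegular) {o : Ordinal.{u}}
    (ho : o.card < μ) (s : Ordinal.{u} → Ordinal.{u}) (hs : ∀ γ < μ.ord, s γ < μ.ord) :
    ∃ G : Ordinal.{u} → Ordinal.{u}, (∀ i j, i < j → s (G i) ≤ G j) ∧ G o < μ.ord ∧
      ∀ x < G o, ∃ i < o, x < s (G i) := by
  obtain ⟨G, hG⟩ : ∃ G : Ordinal.{u} → Ordinal.{u}, ∀ i, G i = ⨆ j : Iio i, s (G j) :=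
    ⟨lt_wf.fix fun i G => ⨆ j : Iio i, s (G j j.2), fun i => lt_wf.fix_eq _ i⟩
  refine ⟨G, fun i j hij => ?_, ?_, fun x hx => ?_⟩
  · rw [hG j]
    exact le_ciSup Ordinal.bddAbove_of_small (⟨i, hij⟩ : Iio j)
  · suffices ∀ i ≤ o, G i < μ.ord from this o le_rfl
    intro i
    induction i using WellFoundedLT.induction with
    | _ i IH =>
      intro hi
      rw [hG i]
      refine lift_iSup_lt_of_lt_cof ?_ fun j => hs _ (IH j j.2 (j.2.le.trans hi))
      rw [Cardinal.mk_Iio_ordinal, Cardinal.lift_lift, ← lift_cof, hμ.cof_ord, Cardinal.lift_lt]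
      exact (card_le_card hi).trans_lt ho
  · rw [hG o] at hx
    obtain ⟨⟨i, hi⟩, hxi⟩ := exists_lt_of_lt_ciSup' hx
    exact ⟨i, hi, hxi⟩

/-- A weak form of Fodor's lemma. -/
theorem Ordinal.exists_lift_le_mk_setOf_subset_Iio {κ μ : Cardinal.{u}} (hκ : κ.IsRegular)
    (hμ : μ.IsRegular) (hκμ : κ < μ) (M : Ordinal.{u} → Set Ordinal.{u})
    (hM : ∀ β < μ.ord, M β ⊆ Iio β ∧ #(M β) < Cardinal.lift.{u + 1} κ) :
    ∃ γ < μ.ord, Cardinal.lift.{u + 1} μ ≤ #{β | β < μ.ord ∧ M β ⊆ Iio γ} := by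
  by_contra! hsmall
  have hbounded : ∀ γ < μ.ord, ∃ b < μ.ord, {β | β < μ.ord ∧ M β ⊆ Iio γ} ⊆ Iio b :=
    fun γ hγ => exists_subset_Iio_of_mk_lt_cof (fun β hβ => hβ.1)
      (by rw [hμ.cof_ord]; exact hsmall γ hγ)
  choose! b hbθ hb using hbounded
  obtain ⟨G, hGs, hGθ, hGo⟩ := exists_closing_sequence hμ (o := κ.ord) (by rwa [card_ord])
    (fun γ => max (b γ) (γ + 1))
    fun γ hγ => max_lt (hbθ γ hγ) ((isSuccLimit_ord hμ.aleph0_le).add_one_lt hγ)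
  -- `G κ.ord` has cofinality `κ`, so its small set `M (G κ.ord)` lies below some `G k`; but then
  -- `G κ.ord` is counted at `G k`, hence lies below `b (G k) ≤ G κ.ord`
  have hbelow : ∀ x ∈ M (G κ.ord), ∃ j < κ.ord, x < max (b (G j)) (G j + 1) :=
    fun x hx => hGo x ((hM _ hGθ).1 hx)
  choose! j hjκ hxj using hbelow
  obtain ⟨k, hkκ, hjk⟩ := exists_subset_Iio_of_mk_lt_cof (s := j '' M (G κ.ord)) (a := κ.ord)
    (by rintro _ ⟨x, hx, rfl⟩; exact hjκ x hx)
    (mk_image_le.trans_lt ((hM _ hGθ).2.trans_eq (by rw [hκ.cof_ord])))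
  have hGk : G k < G κ.ord :=
    ((lt_add_one _).trans_le (le_max_right _ _)).trans_le (hGs _ _ hkκ)
  have hmem : G κ.ord ∈ {β | β < μ.ord ∧ M β ⊆ Iio (G k)} :=
    ⟨hGθ, fun x hx => (hxj x hx).trans_le (hGs _ _ (hjk (mem_image_of_mem j hx)))⟩
  exact ((hb _ (hGk.trans hGθ) hmem).trans_le ((le_max_left _ _).trans (hGs _ _ hkκ))).false

theorem Ordinal.exists_subset_mk_eq_forall_eq {μ : Cardinal.{u}} (hμ : μ.IsRegular)
    {D : Set Ordinal.{u}} (hD : D ⊆ Iio μ.ord) (hμD : Cardinal.lift.{u + 1} μ ≤ #D)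
    {β : Type (u + 1)} {F : Ordinal.{u} → β} {T : Set β} (hF : MapsTo F D T)
    (hT : #T < Cardinal.lift.{u + 1} μ) :
    ∃ X ⊆ D, #X = Cardinal.lift.{u + 1} μ ∧ ∀ a ∈ X, ∀ b ∈ X, F a = F b := by
  obtain ⟨t, X, hXD, hμX, hXt⟩ := infinite_pigeonhole_set (fun x : D => (⟨F x, hF x.2⟩ : T)) _
    hμD (aleph0_le_lift.2 hμ.aleph0_le) (by rwa [← lift_ord, ← lift_cof, hμ.cof_ord])
  refine ⟨X, hXD, le_antisymm ?_ hμX, fun a ha b hb => ?_⟩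
  · calc #X ≤ #(Iio μ.ord) := mk_le_mk_of_subset (hXD.trans hD)
      _ = Cardinal.lift.{u + 1} μ := by rw [Cardinal.mk_Iio_ordinal, card_ord]
  · exact congrArg Subtype.val ((hXt ha).trans (hXt hb).symm)

theorem OT_image_Iio {o : Ordinal.{0}} {e : Ordinal.{0} → Ordinal.{0}}
    (he : StrictMonoOn e (Iio o)) :
    OT (e '' Iio o) o := by
  have hiso : otype (Iio o) = otype (e '' Iio o) :=
    (he.orderIso e (Iio o)).toRelIsoLT.ordinalType_congr
  exact hiso.symm.trans ((type_Iio_lt o).trans (typein_ordinal o))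

theorem exists_strictMonoOn_mapsTo_of_lift_le_mk {κ : Cardinal.{0}} {M : Set Ordinal.{0}}
    (h : lift κ ≤ #M) :
    ∃ e : Ordinal → Ordinal, StrictMonoOn e (Iio κ.ord) ∧ MapsTo e (Iio κ.ord) M := by
  have hle : otype (Iio κ.ord) ≤ otype M := by
    rw [show otype (Iio κ.ord) = lift κ.ord from (type_Iio_lt _).trans (typein_ordinal _),
      lift_ord, ord_le, otype, card_type]
    exact h
  obtain ⟨g⟩ := type_le_iff'.1 hle
  refine ⟨fun j => if hj : j < κ.ord then g ⟨j, hj⟩ else 0, fun j hj k hk hjk => ?_,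
    fun j hj => ?_⟩
  · simp only [dif_pos (mem_Iio.1 hj), dif_pos (mem_Iio.1 hk)]
    exact g.map_rel_iff.2 (show (⟨j, hj⟩ : Iio κ.ord) < ⟨k, hk⟩ from hjk)
  · simp only [dif_pos (mem_Iio.1 hj)]
    exact (g _).2

section Homog

variable {α : Type*} {f : Ordinal.{u} → Ordinal.{u} → α} {i : α} {X Y : Set Ordinal.{u}}
  {a b : Ordinal.{u}}

theorem Homog.mono (hY : Homog f Y i) (hXY : X ⊆ Y) : Homog f X i :=
  fun a ha b hb => hY a (hXY ha) b (hXY hb)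

theorem Homog.insert_of_forall_lt (hX : Homog f X i) (hb : ∀ a ∈ X, a < b ∧ f a b = i) :
    Homog f (insert b X) i := by
  rintro x (rfl | hx) y (rfl | hy) hxy
  · exact (hxy.ne rfl).elim
  · exact ((hb y hy).1.not_gt hxy).elim
  · exact (hb x hx).2
  · exact hX x hx y hy hxy

variable (f i)

def IsHomogBelow (b : Ordinal.{u}) (X : Set Ordinal.{u}) : Prop :=
  Homog f X i ∧ ∀ a ∈ X, a < b ∧ f a b = i

theorem exists_maximal_isHomogBelow (b : Ordinal.{u}) : ∃ X, Maximal (IsHomogBelow f i b) X := by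
  refine zorn_subset _ fun C hCsub hC => ⟨⋃₀ C, ⟨?_, ?_⟩, fun X hX => subset_sUnion_of_mem hX⟩
  · rintro x ⟨X, hX, hx⟩ y ⟨Y, hY, hy⟩ hxy
    rcases hC.total hX hY with hXY | hYX
    · exact (hCsub hY).1 x (hXY hx) y hy hxy
    · exact (hCsub hX).1 x hx y (hYX hy) hxy
  · rintro x ⟨X, hX, hx⟩
    exact (hCsub hX).2 x hx

noncomputable def maxHomogBelow (b : Ordinal.{u}) : Set Ordinal.{u} :=
  (exists_maximal_isHomogBelow f i b).choose

theorem maximal_maxHomogBelow (b : Ordinal.{u}) :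
    Maximal (IsHomogBelow f i b) (maxHomogBelow f i b) :=
  (exists_maximal_isHomogBelow f i b).choose_spec

theorem maxHomogBelow_subset_Iio (b : Ordinal.{u}) : maxHomogBelow f i b ⊆ Iio b :=
  fun a ha => ((maximal_maxHomogBelow f i b).prop.2 a ha).1

variable {f i}

theorem apply_ne_of_maxHomogBelow_subset (hab : a < b)
    (h : maxHomogBelow f i b ⊆ maxHomogBelow f i a) : f a b ≠ i := by
  intro hfab
  obtain ⟨⟨hMa, hMa'⟩, -⟩ := maximal_maxHomogBelow f i a
  obtain ⟨⟨hMb, hMb'⟩, hmax⟩ := maximal_maxHomogBelow f i b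
  have hins : IsHomogBelow f i b (insert a (maxHomogBelow f i b)) := by
    refine ⟨hMb.insert_of_forall_lt fun c hc => hMa' c (h hc), ?_⟩
    rintro c (rfl | hc)
    exacts [⟨hab, hfab⟩, hMb' c hc]
  have ha : a ∈ maxHomogBelow f i a := h (hmax hins (subset_insert _ _) (mem_insert a _))
  exact (hMa' a ha).1.false

end Homog

theorem IsHomogBelow.exists_homog_OT_add_one {α : Type*} {f : Ordinal.{0} → Ordinal.{0} → α}
    {i : α} {β : Ordinal.{0}} {M : Set Ordinal.{0}} (hM : IsHomogBelow f i β M) {κ : Cardinal.{0}}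
    (hκ : Cardinal.lift κ ≤ #M) : ∃ X ⊆ Iic β, OT X (κ.ord + 1) ∧ Homog f X i := by
  obtain ⟨e, he, heM⟩ := exists_strictMonoOn_mapsTo_of_lift_le_mk hκ
  have he' : StrictMonoOn (fun j => if j < κ.ord then e j else β) (Iio (κ.ord + 1)) := by
    intro j hj k hk hjk
    have hkκ : k ≤ κ.ord := lt_add_one_iff.1 (mem_Iio.1 hk)
    have hjκ : j < κ.ord := hjk.trans_le hkκ
    rcases hkκ.lt_or_eq with hkκ | rfl
    · simpa only [if_pos hjκ, if_pos hkκ] using he hjκ hkκ hjk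
    · simpa only [if_pos hjκ, lt_irrefl, if_false] using (hM.2 _ (heM hjκ)).1
  have hsub : (fun j => if j < κ.ord then e j else β) '' Iio (κ.ord + 1) ⊆ insert β M := by
    rintro _ ⟨j, -, rfl⟩
    by_cases hj : j < κ.ord
    · simpa only [if_pos hj] using mem_insert_of_mem β (heM hj)
    · simpa only [if_neg hj] using mem_insert β M
  refine ⟨_, hsub.trans (insert_subset_iff.2 ⟨mem_Iic.2 le_rfl, fun a ha => (hM.2 a ha).1.le⟩),
    OT_image_Iio he', (hM.1.insert_of_forall_lt hM.2).mono hsub⟩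

theorem mk_subsets_Iio_lt_lift_succ_succ_twoLT {κ : Cardinal.{0}} (hκ : κ.IsRegular)
    {γ : Ordinal.{0}} (hγ : γ < (succ (succ (twoLT κ))).ord) :
    #{t : Set Ordinal.{0} // t ⊆ Iio γ ∧ #t < Cardinal.lift κ} <
      Cardinal.lift (succ (succ (twoLT κ))) := by
  have hν : ℵ₀ ≤ twoLT κ := hκ.aleph0_le.trans (le_twoLT κ)
  refine (mk_subsets_mk_lt_le (c := Cardinal.lift (succ (twoLT κ))) ?_ ?_ ?_ ?_).trans_lt
    (Cardinal.lift_lt.2 (lt_succ _))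
  · exact aleph0_le_lift.2 (hν.trans (le_succ _))
  · rw [Cardinal.mk_Iio_ordinal, Cardinal.lift_le]
    exact le_of_lt_succ (lt_ord.1 hγ)
  · exact Cardinal.lift_le.2 ((le_twoLT κ).trans (le_succ _))
  · intro ρ hρ
    obtain ⟨ρ, hρκ, rfl⟩ := lt_lift_iff.1 hρ
    rw [← Cardinal.lift_power, Cardinal.lift_le]
    exact succ_power_le hν (hρκ.le.trans (le_twoLT κ)) (twoLT_power_le hκ hρκ)

/-- For `κ` regular and `λ = (2^{<κ})⁺`: `λ⁺ → (λ⁺, κ+1)²`. -/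
theorem lambdaSucc_arrow (κ : Cardinal.{0}) (hκ : κ.IsRegular)
    (f : Ordinal → Ordinal → Fin 2) :
    (∃ X ⊆ Set.Iio (Order.succ (Order.succ (twoLT κ))).ord,
        Cardinal.mk X = Cardinal.lift.{1,0} (Order.succ (Order.succ (twoLT κ))) ∧
        Homog f X 0) ∨
      ∃ X ⊆ Set.Iio (Order.succ (Order.succ (twoLT κ))).ord,
        OT X (κ.ord + 1) ∧ Homog f X 1 := by
  have hν : ℵ₀ ≤ succ (twoLT κ) := hκ.aleph0_le.trans ((le_twoLT κ).trans (le_succ _))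
  have hμ : (succ (succ (twoLT κ))).IsRegular := isRegular_succ hν
  by_cases hlarge : ∃ β < (succ (succ (twoLT κ))).ord, Cardinal.lift κ ≤ #(maxHomogBelow f 1 β)
  · obtain ⟨β, hβ, hκβ⟩ := hlarge
    obtain ⟨X, hXβ, hX⟩ := (maximal_maxHomogBelow f 1 β).prop.exists_homog_OT_add_one hκβ
    exact Or.inr ⟨X, hXβ.trans (Iic_subset_Iio.2 hβ), hX⟩
  push Not at hlarge
  have hκμ : κ < succ (succ (twoLT κ)) := ((le_twoLT κ).trans (le_succ _)).trans_lt (lt_succ _)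
  obtain ⟨γ, hγ, hD⟩ := exists_lift_le_mk_setOf_subset_Iio hκ hμ hκμ (maxHomogBelow f 1)
    fun β hβ => ⟨maxHomogBelow_subset_Iio f 1 β, hlarge β hβ⟩
  obtain ⟨X, hXD, hX, hXeq⟩ := exists_subset_mk_eq_forall_eq hμ (fun β hβ => hβ.1) hD
    (T := {t | t ⊆ Iio γ ∧ #t < Cardinal.lift κ}) (fun β hβ => ⟨hβ.2, hlarge β hβ.1⟩)
    (mk_subsets_Iio_lt_lift_succ_succ_twoLT hκ hγ)
  refine Or.inl ⟨X, fun β hβ => (hXD hβ).1, hX, fun a ha b hb hab => ?_⟩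
  have hne := apply_ne_of_maxHomogBelow_subset hab (hXeq b hb a ha).subset
  omega
end
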